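/- Embedding of the total-correctness Hoare logic: for any While statement s and state predicates U and Z, if ⊢t {U} s {Z} is derivable in the state-based total-correctness Hoare logic (with the while-fun rule), then ⊢{U} s {finite ** [Z]} is derivable in the trace-based Hoare logic. -/

import Mathlib

namespace WhileTrace

/-- Program variables. -/
abbrev Var := ℕ
/-- States assign integer values to variables. -/
abbrev State := Var → ℤ
/-- Arithmetic expressions, modelled by their integer value in each state. -/
abbrev Expr := State → ℤ

/-- State update `σ[x ↦ v]`. -/
def update (σ : State) (x : Var) (v : ℤ) : State := Function.update σ x v

/-- Reading an expression as a boolean: `σ ⊨ e`. -/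
def istrue (e : Expr) (σ : State) : Prop := e σ ≠ 0

/-- Traces: nonempty, possibly infinite sequences of states
(a head state together with a possibly infinite sequence of further states). -/
def Trace : Type := State × Stream'.Seq State

/-- The singleton trace `⟨σ⟩`. -/
def Trace.single (σ : State) : Trace := (σ, Stream'.Seq.nil)

/-- The cons trace `σ :: τ`. -/
def Trace.cons (σ : State) (τ : Trace) : Trace := (σ, Stream'.Seq.cons τ.1 τ.2)

/-- The first state of a trace. -/
def Trace.hd (τ : Trace) : State := τ.1

/-- Bisimilarity of traces `τ ≈ τ'`, as a greatest fixed point: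
there is a relation `R` relating the two traces that is consistent with the
coinductive rules `⟨σ⟩ ≈ ⟨σ⟩` and `σ::τ ≈ σ::τ'` whenever `τ ≈ τ'`. -/
def Bisim (τ τ' : Trace) : Prop :=
  ∃ R : Trace → Trace → Prop, R τ τ' ∧
    ∀ a b, R a b →
      (∃ σ, a = Trace.single σ ∧ b = Trace.single σ) ∨
      (∃ σ a' b', a = Trace.cons σ a' ∧ b = Trace.cons σ b' ∧ R a' b')

/-- Finiteness `τ ↓ σ` : `τ` is finite with last state `σ` (inductive). -/
inductive Converges : Trace → State → Prop
  | single (σ : State) : Converges (Trace.single σ) σ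
  | cons (σ' : State) {τ : Trace} {σ : State} :
      Converges τ σ → Converges (Trace.cons σ' τ) σ

/-- Infiniteness of a trace (coinductive, as a greatest fixed point). -/
def InfiniteT (τ : Trace) : Prop :=
  ∃ P : Trace → Prop, P τ ∧ ∀ a, P a → ∃ σ a', a = Trace.cons σ a' ∧ P a'

/-- Statements of the While language. -/
inductive Stmt : Type
  | assign (x : Var) (e : Expr)
  | skip
  | seq (s₀ s₁ : Stmt)
  | ifte (e : Expr) (st sf : Stmt)
  | whileDo (e : Expr) (st : Stmt)

/-- A pair of relations `(E, ES)` is consistent with the rules of evaluation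
and extended evaluation: every claimed evaluation is backed by one of the
coinductive rules, with premises again in `(E, ES)`. -/
def EvalConsistent (E : Stmt → State → Trace → Prop)
    (ES : Stmt → Trace → Trace → Prop) : Prop :=
  (∀ x e σ τ, E (.assign x e) σ τ →
      τ = Trace.cons σ (Trace.single (update σ x (e σ)))) ∧
  (∀ σ τ, E .skip σ τ → τ = Trace.single σ) ∧
  (∀ s₀ s₁ σ τ', E (.seq s₀ s₁) σ τ' → ∃ τ, E s₀ σ τ ∧ ES s₁ τ τ') ∧
  (∀ e st sf σ τ, E (.ifte e st sf) σ τ →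
      (istrue e σ ∧ ES st (Trace.cons σ (Trace.single σ)) τ) ∨
      (¬ istrue e σ ∧ ES sf (Trace.cons σ (Trace.single σ)) τ)) ∧
  (∀ e st σ τ', E (.whileDo e st) σ τ' →
      (istrue e σ ∧ ∃ τ, ES st (Trace.cons σ (Trace.single σ)) τ ∧
        ES (.whileDo e st) τ τ') ∨
      (¬ istrue e σ ∧ τ' = Trace.cons σ (Trace.single σ))) ∧
  (∀ s τ τ', ES s τ τ' →
      (∃ σ, τ = Trace.single σ ∧ E s σ τ') ∨
      (∃ σ τ₀ τ₀', τ = Trace.cons σ τ₀ ∧ τ' = Trace.cons σ τ₀' ∧ ES s τ₀ τ₀'))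

/-- Evaluation `(s,σ) ⇒ τ` : greatest fixed point of the mutual coinductive rules. -/
def Exec (s : Stmt) (σ : State) (τ : Trace) : Prop :=
  ∃ E ES, EvalConsistent E ES ∧ E s σ τ

/-- Extended evaluation `(s,τ) ⇒* τ'`. -/
def ExecSeq (s : Stmt) (τ τ' : Trace) : Prop :=
  ∃ E ES, EvalConsistent E ES ∧ ES s τ τ'

/-- The standard inductive state-based big-step semantics `(s,σ) ⇓ σ'`. -/
inductive BigStep : Stmt → State → State → Prop
  | assign (x : Var) (e : Expr) (σ : State) :
      BigStep (.assign x e) σ (update σ x (e σ))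
  | skip (σ : State) : BigStep .skip σ σ
  | seq {s₀ s₁ : Stmt} {σ σ' σ'' : State} :
      BigStep s₀ σ σ' → BigStep s₁ σ' σ'' → BigStep (.seq s₀ s₁) σ σ''
  | ifTrue {e : Expr} {st sf : Stmt} {σ σ' : State} :
      istrue e σ → BigStep st σ σ' → BigStep (.ifte e st sf) σ σ'
  | ifFalse {e : Expr} {st sf : Stmt} {σ σ' : State} :
      ¬ istrue e σ → BigStep sf σ σ' → BigStep (.ifte e st sf) σ σ'
  | whileTrue {e : Expr} {st : Stmt} {σ σ' σ'' : State} :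
      istrue e σ → BigStep st σ σ' → BigStep (.whileDo e st) σ' σ'' →
      BigStep (.whileDo e st) σ σ''
  | whileFalse {e : Expr} {st : Stmt} {σ : State} :
      ¬ istrue e σ → BigStep (.whileDo e st) σ σ

/-- State predicates. -/
abbrev StatePred := State → Prop
/-- Trace predicates. -/
abbrev TracePred := Trace → Prop

/-- A setoid trace predicate respects bisimilarity. -/
def IsSetoidPred (P : TracePred) : Prop := ∀ τ τ', P τ → Bisim τ τ' → P τ'

/-- The singleton predicate `[U]`. -/
def Sglt (U : StatePred) : TracePred :=
  fun τ => ∃ σ, U σ ∧ τ = Trace.single σ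

/-- The doubleton predicate `⟨U⟩`. -/
def Dup (U : StatePred) : TracePred :=
  fun τ => ∃ σ, U σ ∧ τ = Trace.cons σ (Trace.single σ)

/-- The update predicate `U[x ↦ e]`. -/
def UpdPred (U : StatePred) (x : Var) (e : Expr) : TracePred :=
  fun τ => ∃ σ, U σ ∧ τ = Trace.cons σ (Trace.single (update σ x (e σ)))

/-- `Q follows τ in τ'` (coinductive, as a greatest fixed point). -/
def Follows (Q : TracePred) (τ τ' : Trace) : Prop :=
  ∃ R : Trace → Trace → Prop, R τ τ' ∧
    ∀ a b, R a b →
      (∃ σ, a = Trace.single σ ∧ b.hd = σ ∧ Q b) ∨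
      (∃ σ a' b', a = Trace.cons σ a' ∧ b = Trace.cons σ b' ∧ R a' b')

/-- The chop `P ** Q`. -/
def Chop (P Q : TracePred) : TracePred :=
  fun τ' => ∃ τ, P τ ∧ Follows Q τ τ'

/-- The iteration `P*` (coinductive, as a greatest fixed point). -/
def Iter (P : TracePred) : TracePred := fun τ =>
  ∃ X : TracePred, X τ ∧
    ∀ a, X a → Sglt (fun _ => True) a ∨ ∃ τ₀, P τ₀ ∧ Follows X τ₀ a

/-- `Last P` : states that are the last state of some finite trace satisfying `P`. -/
def Last (P : TracePred) : StatePred := fun σ => ∃ τ, P τ ∧ Converges τ σ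

/-- The trace predicate `finite`. -/
def FiniteT : TracePred := fun τ => ∃ σ, Converges τ σ

/-- Derivability `⊢ {U} s {P}` in the trace-based Hoare logic. -/
inductive THoare : StatePred → Stmt → TracePred → Prop
  | assign (U : StatePred) (x : Var) (e : Expr) :
      THoare U (.assign x e) (UpdPred U x e)
  | skip (U : StatePred) : THoare U .skip (Sglt U)
  | seq {U V : StatePred} {s₀ s₁ : Stmt} {P Q : TracePred} :
      THoare U s₀ (Chop P (Sglt V)) → THoare V s₁ Q →
      THoare U (.seq s₀ s₁) (Chop P Q)
  | ifte {U : StatePred} {e : Expr} {st sf : Stmt} {P : TracePred} :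
      THoare (fun σ => istrue e σ ∧ U σ) st P →
      THoare (fun σ => ¬ istrue e σ ∧ U σ) sf P →
      THoare U (.ifte e st sf) (Chop (Dup U) P)
  | whileDo {U I : StatePred} {e : Expr} {st : Stmt} {P : TracePred} :
      (∀ σ, U σ → I σ) →
      THoare (fun σ => istrue e σ ∧ I σ) st (Chop P (Sglt I)) →
      THoare U (.whileDo e st)
        (Chop (Dup U)
          (Chop (Iter (Chop P (Dup I))) (Sglt (fun σ => ¬ istrue e σ))))
  | conseq {U U' : StatePred} {s : Stmt} {P P' : TracePred} :
      (∀ σ, U σ → U' σ) → THoare U' s P' → (∀ τ, P' τ → P τ) →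
      THoare U s P
  | exist {Z : Type} {U : Z → StatePred} {s : Stmt} {P : Z → TracePred} :
      (∀ z, THoare (U z) s (P z)) →
      THoare (fun σ => ∃ z, U z σ) s (fun τ => ∃ z, P z τ)

/-- Derivability `⊢p {U} s {Z}` in the state-based partial-correctness Hoare logic. -/
inductive PHoare : StatePred → Stmt → StatePred → Prop
  | assign (Z : StatePred) (x : Var) (e : Expr) :
      PHoare (fun σ => Z (update σ x (e σ))) (.assign x e) Z
  | skip (U : StatePred) : PHoare U .skip U
  | seq {U V Z : StatePred} {s₀ s₁ : Stmt} :
      PHoare U s₀ V → PHoare V s₁ Z → PHoare U (.seq s₀ s₁) Z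
  | ifte {U Z : StatePred} {e : Expr} {st sf : Stmt} :
      PHoare (fun σ => istrue e σ ∧ U σ) st Z →
      PHoare (fun σ => ¬ istrue e σ ∧ U σ) sf Z →
      PHoare U (.ifte e st sf) Z
  | whileDo {I : StatePred} {e : Expr} {st : Stmt} :
      PHoare (fun σ => istrue e σ ∧ I σ) st I →
      PHoare I (.whileDo e st) (fun σ => I σ ∧ ¬ istrue e σ)
  | exist {Z : Type} {U V : Z → StatePred} {s : Stmt} :
      (∀ z, PHoare (U z) s (V z)) →
      PHoare (fun σ => ∃ z, U z σ) s (fun σ => ∃ z, V z σ)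
  | conseq {U U' Z Z' : StatePred} {s : Stmt} :
      (∀ σ, U σ → U' σ) → PHoare U' s Z' → (∀ σ, Z' σ → Z σ) →
      PHoare U s Z

/-- Derivability `⊢t {U} s {Z}` in the state-based total-correctness Hoare
logic, with the `while-fun` rule. -/
inductive TotHoare : StatePred → Stmt → StatePred → Prop
  | assign (Z : StatePred) (x : Var) (e : Expr) :
      TotHoare (fun σ => Z (update σ x (e σ))) (.assign x e) Z
  | skip (U : StatePred) : TotHoare U .skip U
  | seq {U V Z : StatePred} {s₀ s₁ : Stmt} :
      TotHoare U s₀ V → TotHoare V s₁ Z → TotHoare U (.seq s₀ s₁) Z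
  | ifte {U Z : StatePred} {e : Expr} {st sf : Stmt} :
      TotHoare (fun σ => istrue e σ ∧ U σ) st Z →
      TotHoare (fun σ => ¬ istrue e σ ∧ U σ) sf Z →
      TotHoare U (.ifte e st sf) Z
  | whileFun {I : StatePred} {e : Expr} {st : Stmt} (t : State → ℕ) (m : ℕ) :
      (∀ n : ℕ, TotHoare (fun σ => istrue e σ ∧ I σ ∧ t σ = n) st
        (fun σ => I σ ∧ t σ < n)) →
      TotHoare (fun σ => I σ ∧ t σ = m) (.whileDo e st)
        (fun σ => I σ ∧ t σ ≤ m ∧ ¬ istrue e σ)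
  | exist {Z : Type} {U V : Z → StatePred} {s : Stmt} :
      (∀ z, TotHoare (U z) s (V z)) →
      TotHoare (fun σ => ∃ z, U z σ) s (fun σ => ∃ z, V z σ)
  | conseq {U U' Z Z' : StatePred} {s : Stmt} :
      (∀ σ, U σ → U' σ) → TotHoare U' s Z' → (∀ σ, Z' σ → Z σ) →
      TotHoare U s Z


/-! The embedding is by induction on the total-correctness derivation, with `finite ** [Z]` read as
"finite and ending in a `Z`-state". The only real case is `while-fun`: the body's triple is
strengthened so that its traces remember their initial state, hence record that the variant `t`
decreases, and then the iteration `(P ** ⟨I⟩)*` is shown finite by well-founded induction on the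
value of `t` at the head of the trace. -/

namespace Trace

lemma single_ne_cons (σ σ' : State) (τ : Trace) : single σ ≠ cons σ' τ := by
  intro h
  simpa [single, cons] using congrArg (fun τ : Trace => τ.2.get? 0) h

lemma cons_injective {σ σ' : State} {τ τ' : Trace} (h : cons σ τ = cons σ' τ') :
    σ = σ' ∧ τ = τ' := by
  obtain ⟨h₁, h₂⟩ := Stream'.Seq.cons_injective2 (congrArg Prod.snd h)
  exact ⟨congrArg Prod.fst h, Prod.ext h₁ h₂⟩

@[simp] lemma hd_single (σ : State) : (single σ).hd = σ := rfl

@[simp] lemma hd_cons (σ : State) (τ : Trace) : (cons σ τ).hd = σ := rfl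

end Trace

open Trace

lemma follows_single_iff {Q : TracePred} {σ : State} {τ' : Trace} :
    Follows Q (single σ) τ' ↔ τ'.hd = σ ∧ Q τ' := by
  constructor
  · rintro ⟨R, hR, hstep⟩
    rcases hstep _ _ hR with ⟨σ₁, h, hhd, hQ⟩ | ⟨σ₁, a', b', h, -, -⟩
    · exact ⟨hhd.trans (congrArg Prod.fst h).symm, hQ⟩
    · exact absurd h (single_ne_cons _ _ _)
  · rintro ⟨hhd, hQ⟩
    refine ⟨fun a b => a = single σ ∧ b = τ', ⟨rfl, rfl⟩, ?_⟩
    rintro a b ⟨rfl, rfl⟩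
    exact Or.inl ⟨σ, rfl, hhd, hQ⟩

lemma follows_cons_iff {Q : TracePred} {σ : State} {τ τ' : Trace} :
    Follows Q (cons σ τ) τ' ↔ ∃ b, τ' = cons σ b ∧ Follows Q τ b := by
  constructor
  · rintro ⟨R, hR, hstep⟩
    rcases hstep _ _ hR with ⟨σ₁, h, -, -⟩ | ⟨σ₁, a', b', h, rfl, hR'⟩
    · exact absurd h.symm (single_ne_cons _ _ _)
    · obtain ⟨rfl, rfl⟩ := cons_injective h
      exact ⟨b', rfl, R, hR', hstep⟩
  · rintro ⟨b, rfl, R, hR, hstep⟩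
    refine ⟨fun a c => R a c ∨ (a = cons σ τ ∧ c = cons σ b), Or.inr ⟨rfl, rfl⟩, ?_⟩
    rintro a c (hac | ⟨rfl, rfl⟩)
    · rcases hstep a c hac with h | ⟨σ₁, a', b', ha, hc, hR'⟩
      · exact Or.inl h
      · exact Or.inr ⟨σ₁, a', b', ha, hc, Or.inl hR'⟩
    · exact Or.inr ⟨σ, τ, b, rfl, rfl, Or.inl hR⟩

lemma Follows.hd_eq {Q : TracePred} {τ τ' : Trace} (h : Follows Q τ τ') : τ'.hd = τ.hd := by
  obtain ⟨R, hR, hstep⟩ := h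
  rcases hstep _ _ hR with ⟨σ, rfl, hhd, -⟩ | ⟨σ, a', b', rfl, rfl, -⟩
  · exact hhd
  · rfl

def EndsIn (W : StatePred) : TracePred := fun τ => ∃ σ, Converges τ σ ∧ W σ

lemma EndsIn.mono {V W : StatePred} (hVW : ∀ σ, V σ → W σ) {τ : Trace} :
    EndsIn V τ → EndsIn W τ
  | ⟨σ, hc, hV⟩ => ⟨σ, hc, hVW σ hV⟩

lemma Converges.endsIn_of_follows {Q : TracePred} {W : StatePred} {τ τ' : Trace} {σ : State}
    (hc : Converges τ σ) (hf : Follows Q τ τ') (hQ : ∀ b, Q b → b.hd = σ → EndsIn W b) :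
    EndsIn W τ' := by
  induction hc generalizing τ' with
  | single σ =>
    obtain ⟨hhd, hQτ'⟩ := follows_single_iff.mp hf
    exact hQ τ' hQτ' hhd
  | cons σ' _ ih =>
    obtain ⟨b, rfl, hfb⟩ := follows_cons_iff.mp hf
    obtain ⟨σ₁, hc₁, hW⟩ := ih hfb hQ
    exact ⟨σ₁, hc₁.cons σ', hW⟩

lemma endsIn_of_chop {P Q : TracePred} {W : StatePred} (hP : ∀ τ, P τ → FiniteT τ)
    (hQ : ∀ τ, Q τ → EndsIn W τ) {τ' : Trace} : Chop P Q τ' → EndsIn W τ'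
  | ⟨τ, hPτ, hf⟩ =>
    have ⟨_, hc⟩ := hP τ hPτ
    hc.endsIn_of_follows hf fun b hb _ => hQ b hb

lemma Converges.follows_sglt_iff {W : StatePred} {τ τ' : Trace} {σ : State}
    (hc : Converges τ σ) : Follows (Sglt W) τ τ' ↔ τ' = τ ∧ W σ := by
  induction hc generalizing τ' with
  | single σ =>
    simp only [follows_single_iff, Sglt]
    constructor
    · rintro ⟨rfl, σ₁, hW, rfl⟩
      exact ⟨rfl, hW⟩
    · rintro ⟨rfl, hW⟩
      exact ⟨rfl, σ, hW, rfl⟩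
  | cons σ' _ ih =>
    simp only [follows_cons_iff, ih]
    constructor
    · rintro ⟨b, rfl, rfl, hW⟩
      exact ⟨rfl, hW⟩
    · rintro ⟨rfl, hW⟩
      exact ⟨_, rfl, rfl, hW⟩

lemma chop_finite_sglt_iff {Z : StatePred} {τ : Trace} :
    Chop FiniteT (Sglt Z) τ ↔ EndsIn Z τ := by
  constructor
  · rintro ⟨τ₀, ⟨σ, hc⟩, hf⟩
    obtain ⟨rfl, hZ⟩ := hc.follows_sglt_iff.mp hf
    exact ⟨σ, hc, hZ⟩
  · rintro ⟨σ, hc, hZ⟩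
    exact ⟨τ, ⟨σ, hc⟩, hc.follows_sglt_iff.mpr ⟨rfl, hZ⟩⟩

lemma THoare.of_endsIn {U Z : StatePred} {s : Stmt} {P : TracePred} (h : THoare U s P)
    (hP : ∀ τ, P τ → EndsIn Z τ) : THoare U s (Chop FiniteT (Sglt Z)) :=
  .conseq (fun _ h => h) h fun τ hτ => chop_finite_sglt_iff.mpr (hP τ hτ)

lemma dup_finite {U : StatePred} {τ : Trace} : Dup U τ → FiniteT τ
  | ⟨σ, _, h⟩ => h ▸ ⟨σ, (Converges.single σ).cons σ⟩

lemma Iter.endsIn {S : TracePred} {J : StatePred} (t : State → ℕ)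
    (hS : ∀ b, S b → EndsIn (fun σ => J σ ∧ t σ < t b.hd) b) {τ : Trace}
    (hτ : Iter S τ) (hJ : J τ.hd) : EndsIn J τ := by
  induction hn : t τ.hd using Nat.strong_induction_on generalizing τ with
  | _ n ih =>
    obtain ⟨X, hX, hstep⟩ := hτ
    rcases hstep τ hX with ⟨σ, -, rfl⟩ | ⟨τ₀, hSτ₀, hf⟩
    · exact ⟨σ, Converges.single σ, hJ⟩
    · obtain ⟨σ', hc, hJσ', hlt⟩ := hS τ₀ hSτ₀
      refine hc.endsIn_of_follows hf fun b hXb hb => ?_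
      rw [← hf.hd_eq, hn] at hlt
      exact ih _ (hb ▸ hlt) ⟨X, hXb, hstep⟩ (hb ▸ hJσ') rfl

lemma THoare.pin_hd {U : StatePred} {s : Stmt} {P : TracePred} (h : THoare U s P) (σ₀ : State) :
    THoare (fun σ => U σ ∧ σ = σ₀) s (fun τ => P τ ∧ τ.hd = σ₀) := by
  induction h generalizing σ₀ with
  | assign U x e =>
    refine .conseq (fun _ h => h) (.assign _ x e) ?_
    rintro _ ⟨σ, ⟨hU, rfl⟩, rfl⟩
    exact ⟨⟨σ, hU, rfl⟩, rfl⟩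
  | skip U =>
    refine .conseq (fun _ h => h) (.skip _) ?_
    rintro _ ⟨σ, ⟨hU, rfl⟩, rfl⟩
    exact ⟨⟨σ, hU, rfl⟩, rfl⟩
  | @seq U V s₀ s₁ P Q _ h₁ ih₀ _ =>
    refine .conseq (fun _ h => h)
      (.seq (P := fun τ => P τ ∧ τ.hd = σ₀) (.conseq (fun _ h => h) (ih₀ σ₀) ?_) h₁) ?_
    · rintro _ ⟨⟨τ, hP, hf⟩, hhd⟩
      exact ⟨τ, ⟨hP, hf.hd_eq ▸ hhd⟩, hf⟩
    · rintro _ ⟨τ, ⟨hP, hhd⟩, hf⟩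
      exact ⟨⟨τ, hP, hf⟩, hf.hd_eq.trans hhd⟩
  | ifte hst hsf =>
    refine .conseq (fun _ h => h)
      (.ifte (.conseq (fun _ h => ⟨h.1, h.2.1⟩) hst (fun _ h => h))
        (.conseq (fun _ h => ⟨h.1, h.2.1⟩) hsf (fun _ h => h))) ?_
    rintro _ ⟨_, ⟨σ, ⟨hU, rfl⟩, rfl⟩, hf⟩
    exact ⟨⟨_, ⟨σ, hU, rfl⟩, hf⟩, hf.hd_eq⟩
  | whileDo hUI hst =>
    refine .conseq (fun _ h => h) (.whileDo (fun σ h => hUI σ h.1) hst) ?_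
    rintro _ ⟨_, ⟨σ, ⟨hU, rfl⟩, rfl⟩, hf⟩
    exact ⟨⟨_, ⟨σ, hU, rfl⟩, hf⟩, hf.hd_eq⟩
  | conseq hUU' _ hPP' ih =>
    exact .conseq (fun σ h => ⟨hUU' σ h.1, h.2⟩) (ih σ₀) (fun τ h => ⟨hPP' τ h.1, h.2⟩)
  | exist _ ih =>
    refine .conseq ?_ (.exist fun z => ih z σ₀) ?_
    · rintro σ ⟨⟨z, hU⟩, rfl⟩
      exact ⟨z, hU, rfl⟩
    · rintro τ ⟨z, hP, hhd⟩
      exact ⟨⟨z, hP⟩, hhd⟩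

lemma THoare.and_pre_hd {U : StatePred} {s : Stmt} {P : TracePred} (h : THoare U s P) :
    THoare U s (fun τ => P τ ∧ U τ.hd) := by
  refine .conseq ?_ (.exist fun σ₀ : {σ // U σ} => h.pin_hd σ₀.1) ?_
  · exact fun σ hU => ⟨⟨σ, hU⟩, hU, rfl⟩
  · rintro τ ⟨σ₀, hP, hhd⟩
    exact ⟨hP, hhd ▸ σ₀.2⟩

lemma THoare.whileDo_variant {I : StatePred} {e : Expr} {st : Stmt} (t : State → ℕ) (m : ℕ)
    (hbody : ∀ n : ℕ, THoare (fun σ => istrue e σ ∧ I σ ∧ t σ = n) st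
      (Chop FiniteT (Sglt fun σ => I σ ∧ t σ < n))) :
    THoare (fun σ => I σ ∧ t σ = m) (.whileDo e st)
      (Chop FiniteT (Sglt fun σ => I σ ∧ t σ ≤ m ∧ ¬ istrue e σ)) := by
  -- `t = m` holds only on entry; the loop invariant keeps the bound `t ≤ m`.
  set J : StatePred := fun σ => I σ ∧ t σ ≤ m
  set Decr : TracePred := fun τ => EndsIn (fun σ => t σ < t τ.hd) τ
  have hbody_decr : THoare (fun σ => istrue e σ ∧ J σ) st (Chop Decr (Sglt J)) := by
    have hstrong (n : ℕ) : THoare (fun σ => (istrue e σ ∧ J σ) ∧ t σ = n) st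
        (Chop FiniteT (Sglt fun σ => I σ ∧ t σ < n)) :=
      .conseq (fun _ h => ⟨h.1.1, h.1.2.1, h.2⟩) (hbody n) fun _ h => h
    refine .conseq (fun σ h => ⟨t σ, h, rfl⟩) (.exist fun n => (hstrong n).and_pre_hd) ?_
    rintro τ ⟨n, hτ, ⟨-, -, hm⟩, rfl⟩
    obtain ⟨σ, hc, hI, hlt⟩ := chop_finite_sglt_iff.mp hτ
    exact ⟨τ, ⟨σ, hc, hlt⟩, hc.follows_sglt_iff.mpr ⟨rfl, hI, (hlt.trans_le hm).le⟩⟩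
  have hround : ∀ b, Chop Decr (Dup J) b → EndsIn (fun σ => J σ ∧ t σ < t b.hd) b := by
    rintro b ⟨τ, ⟨σ, hc, hlt⟩, hf⟩
    refine hc.endsIn_of_follows hf ?_
    rintro _ ⟨σ₁, hJ, rfl⟩ rfl
    exact ⟨_, (Converges.single _).cons _, hJ, hf.hd_eq ▸ hlt⟩
  refine (THoare.whileDo (I := J) (fun σ h => ⟨h.1, h.2.le⟩) hbody_decr).of_endsIn ?_
  rintro _ ⟨_, ⟨σ₀, ⟨hI, hm⟩, rfl⟩, hf⟩
  refine ((Converges.single σ₀).cons σ₀).endsIn_of_follows hf ?_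
  rintro b ⟨τ, hiter, hf'⟩ hb
  have hJ : J τ.hd := by
    rw [← hf'.hd_eq, hb]
    exact ⟨hI, hm.le⟩
  obtain ⟨σ, hc, hJσ⟩ := hiter.endsIn t hround hJ
  obtain ⟨rfl, hne⟩ := hc.follows_sglt_iff.mp hf'
  exact ⟨σ, hc, hJσ.1, hJσ.2, hne⟩

/-- Embedding of the total-correctness Hoare logic. -/
theorem totHoare_embed (s : Stmt) (U Z : StatePred) (h : TotHoare U s Z) :
    THoare U s (Chop FiniteT (Sglt Z)) := by
  induction h with
  | assign Z x e =>
    refine (THoare.assign _ x e).of_endsIn ?_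
    rintro _ ⟨σ, hZ, rfl⟩
    exact ⟨_, (Converges.single _).cons σ, hZ⟩
  | skip U =>
    refine (THoare.skip U).of_endsIn ?_
    rintro _ ⟨σ, hU, rfl⟩
    exact ⟨σ, Converges.single σ, hU⟩
  | seq _ _ ih₀ ih₁ =>
    exact (THoare.seq ih₀ ih₁).of_endsIn fun _ =>
      endsIn_of_chop (fun _ h => h) fun _ h => chop_finite_sglt_iff.mp h
  | ifte _ _ ihst ihsf =>
    exact (THoare.ifte ihst ihsf).of_endsIn fun _ =>
      endsIn_of_chop (fun _ => dup_finite) fun _ h => chop_finite_sglt_iff.mp h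
  | whileFun t m _ ih => exact .whileDo_variant t m ih
  | exist _ ih =>
    refine (THoare.exist ih).of_endsIn ?_
    rintro τ ⟨z, hτ⟩
    exact (chop_finite_sglt_iff.mp hτ).mono fun _ hV => ⟨z, hV⟩
  | conseq hUU' _ hZZ' ih =>
    exact .conseq hUU' ih fun τ hτ =>
      chop_finite_sglt_iff.mpr ((chop_finite_sglt_iff.mp hτ).mono hZZ')

end WhileTrace
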